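/- arXiv:1112.4413 — 6 statements merged into one kernel-verified Lean document; each statement's English description precedes it below -/
import Mathlib

section
/- Let Ψ be a p×p real matrix, s ≤ p an integer, and for a subset J ⊆ {1,...,p} let C_J = {Δ ∈ ℝ^p : |Δ_{J^c}|_1 ≤ |Δ_J|_1}. Define κ_q(s) = min over |J| ≤ s of min over Δ ∈ C_J with |Δ|_q = 1 of |ΨΔ|_∞. Then for all 1 ≤ q ≤ ∞, κ_q(s) ≥ (2s)^{-1/q} κ_∞(s). -/
/-!
On the cone `|Δ_{Jᶜ}|₁ ≤ |Δ_J|₁` one has `|Δ|₁ ≤ 2 |Δ_J|₁ ≤ 2 |J| |Δ|_∞`, and interpolating,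
`|Δ|_q^q ≤ |Δ|₁ |Δ|_∞^{q-1} ≤ 2s |Δ|_∞^q`. So a unit `ℓ_q` vector of the cone has
`|Δ|_∞ ≥ (2s)^{-1/q}`, and rescaling it to a unit `ℓ_∞` vector of the same cone gives
`|ΨΔ|_∞ ≥ κ_∞(s) |Δ|_∞ ≥ (2s)^{-1/q} κ_∞(s)`.
-/

open Finset

theorem sum_abs_rpow_le_sum_abs_mul_norm_rpow {ι : Type*} [Fintype ι] (Δ : ι → ℝ) {q : ℝ}
    (hq : 1 ≤ q) :
    ∑ j, |Δ j| ^ q ≤ (∑ j, |Δ j|) * ‖Δ‖ ^ (q - 1) := by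
  rw [sum_mul]
  refine sum_le_sum fun j _ => ?_
  calc |Δ j| ^ q = |Δ j| * |Δ j| ^ (q - 1) := by
        rw [← Real.rpow_one_add' (abs_nonneg _) (by linarith), add_sub_cancel]
    _ ≤ |Δ j| * ‖Δ‖ ^ (q - 1) := by
        gcongr
        exact norm_le_pi_norm Δ j

section

variable {ι : Type*} [Fintype ι] [DecidableEq ι]

/-- The cone `C_J = {Δ : |Δ_{Jᶜ}|₁ ≤ |Δ_J|₁}`. -/
def l1Cone (J : Finset ι) : Set (ι → ℝ) :=
  {Δ | (∑ j, if j ∈ J then 0 else |Δ j|) ≤ ∑ j, if j ∈ J then |Δ j| else 0}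

theorem mem_l1Cone_iff {J : Finset ι} {Δ : ι → ℝ} :
    Δ ∈ l1Cone J ↔ ∑ j ∈ Jᶜ, |Δ j| ≤ ∑ j ∈ J, |Δ j| := by
  simp [l1Cone, sum_ite, filter_not, compl_eq_univ_sdiff]

theorem smul_mem_l1Cone {J : Finset ι} {Δ : ι → ℝ} (hΔ : Δ ∈ l1Cone J) {c : ℝ} (hc : 0 < c) :
    c • Δ ∈ l1Cone J := by
  rw [mem_l1Cone_iff] at hΔ ⊢
  simp only [Pi.smul_apply, smul_eq_mul, abs_mul, abs_of_pos hc, ← mul_sum]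
  exact mul_le_mul_of_nonneg_left hΔ hc.le

theorem sum_abs_le_two_mul_card_mul_norm {J : Finset ι} {Δ : ι → ℝ} (hΔ : Δ ∈ l1Cone J) :
    ∑ j, |Δ j| ≤ 2 * J.card * ‖Δ‖ := by
  have hJ : ∑ j ∈ J, |Δ j| ≤ J.card * ‖Δ‖ :=
    calc ∑ j ∈ J, |Δ j| ≤ ∑ _j ∈ J, ‖Δ‖ := sum_le_sum fun j _ => norm_le_pi_norm Δ j
      _ = J.card * ‖Δ‖ := by rw [sum_const, nsmul_eq_mul]
  rw [← sum_add_sum_compl J]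
  linarith [mem_l1Cone_iff.mp hΔ]

theorem lpNorm_le_two_mul_card_rpow_mul_norm {J : Finset ι} {Δ : ι → ℝ} (hΔ : Δ ∈ l1Cone J)
    {q : ℝ} (hq : 1 ≤ q) :
    (∑ j, |Δ j| ^ q) ^ (1 / q) ≤ (2 * J.card : ℝ) ^ (1 / q) * ‖Δ‖ := by
  have hq0 : 0 < q := by linarith
  have hpow : ∑ j, |Δ j| ^ q ≤ 2 * J.card * ‖Δ‖ ^ q :=
    calc ∑ j, |Δ j| ^ q ≤ (∑ j, |Δ j|) * ‖Δ‖ ^ (q - 1) :=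
          sum_abs_rpow_le_sum_abs_mul_norm_rpow Δ hq
      _ ≤ 2 * J.card * ‖Δ‖ * ‖Δ‖ ^ (q - 1) := by
          gcongr
          exact sum_abs_le_two_mul_card_mul_norm hΔ
      _ = 2 * J.card * ‖Δ‖ ^ q := by
          rw [mul_assoc _ ‖Δ‖, ← Real.rpow_one_add' (norm_nonneg _) (by linarith),
            add_sub_cancel]
  calc (∑ j, |Δ j| ^ q) ^ (1 / q) ≤ (2 * J.card * ‖Δ‖ ^ q) ^ (1 / q) := by
        gcongr
    _ = (2 * J.card : ℝ) ^ (1 / q) * ‖Δ‖ := by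
        rw [Real.mul_rpow (by positivity) (by positivity), ← Real.rpow_mul (norm_nonneg _),
          mul_one_div_cancel hq0.ne', Real.rpow_one]

end

theorem mul_norm_le_norm_apply_of_forall_norm_eq_one {E F : Type*} [NormedAddCommGroup E]
    [NormedSpace ℝ E] [SeminormedAddCommGroup F] [NormedSpace ℝ F] (f : E →ₗ[ℝ] F) {C : Set E}
    (hC : ∀ x ∈ C, ∀ c : ℝ, 0 < c → c • x ∈ C) {κ : ℝ} (hκ : ∀ x ∈ C, ‖x‖ = 1 → κ ≤ ‖f x‖)
    {x : E} (hx : x ∈ C) : κ * ‖x‖ ≤ ‖f x‖ := by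
  rcases eq_or_ne x 0 with rfl | hx0
  · simp
  have ht : 0 < ‖x‖ := norm_pos_iff.mpr hx0
  have hunit := hκ _ (hC x hx _ (inv_pos.mpr ht)) (by simp [norm_smul, ht.ne'])
  rw [map_smul, norm_smul, Real.norm_of_nonneg (inv_nonneg.mpr ht.le), ← div_eq_inv_mul,
    le_div_iff₀ ht] at hunit
  exact hunit

theorem sensitivity_q_vs_infty_general {p : ℕ} (Ψ : Matrix (Fin p) (Fin p) ℝ)
    (s : ℕ) (q : ℝ) (hq : 1 ≤ q) (κ : ℝ)
    (hκ : ∀ J : Finset (Fin p), J.card ≤ s →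
      ∀ Δ : Fin p → ℝ,
        (∑ j, if j ∈ J then 0 else |Δ j|) ≤ (∑ j, if j ∈ J then |Δ j| else 0) →
        ‖Δ‖ = 1 → κ ≤ ‖Ψ.mulVec Δ‖) :
    ∀ J : Finset (Fin p), J.card ≤ s →
      ∀ Δ : Fin p → ℝ,
        (∑ j, if j ∈ J then 0 else |Δ j|) ≤ (∑ j, if j ∈ J then |Δ j| else 0) →
        (∑ j, |Δ j| ^ q) ^ (1 / q) = 1 →
        ((2 * s : ℝ)) ^ (-(1 / q)) * κ ≤ ‖Ψ.mulVec Δ‖ := by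
  intro J hJ Δ hcone hunit
  have hΨ : κ * ‖Δ‖ ≤ ‖Ψ.mulVec Δ‖ :=
    mul_norm_le_norm_apply_of_forall_norm_eq_one Ψ.mulVecLin (C := l1Cone J)
      (fun _ hx _ hc => smul_mem_l1Cone hx hc) (fun Δ hΔ => hκ J hJ Δ hΔ) hcone
  have hnorm : 1 ≤ (2 * s : ℝ) ^ (1 / q) * ‖Δ‖ :=
    calc 1 = (∑ j, |Δ j| ^ q) ^ (1 / q) := hunit.symm
      _ ≤ (2 * J.card : ℝ) ^ (1 / q) * ‖Δ‖ := lpNorm_le_two_mul_card_rpow_mul_norm hcone hq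
      _ ≤ (2 * s : ℝ) ^ (1 / q) * ‖Δ‖ := by gcongr
  have hscale : 0 < (2 * s : ℝ) ^ (1 / q) :=
    pos_of_mul_pos_left (one_pos.trans_le hnorm) (norm_nonneg _)
  have hΔ : (2 * s : ℝ) ^ (-(1 / q)) ≤ ‖Δ‖ := by
    rw [Real.rpow_neg (by positivity), inv_le_iff_one_le_mul₀' hscale]
    exact hnorm
  rcases le_or_gt κ 0 with hκ0 | hκ0
  · exact (mul_nonpos_of_nonneg_of_nonpos (by positivity) hκ0).trans (norm_nonneg _)
  · calc (2 * s : ℝ) ^ (-(1 / q)) * κ ≤ ‖Δ‖ * κ := by gcongr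
      _ ≤ ‖Ψ.mulVec Δ‖ := by linarith

/-- κ_q(s) ≥ (2s)^{-1/q} κ_∞(s) (lower-bound formulation). -/
theorem sensitivity_q_vs_infty {p : ℕ} (Ψ : Matrix (Fin p) (Fin p) ℝ)
    (s : ℕ) (hs : 1 ≤ s) (hsp : s ≤ p) (q : ℝ) (hq : 1 ≤ q) (κ : ℝ)
    (hκ : ∀ J : Finset (Fin p), J.card ≤ s →
      ∀ Δ : Fin p → ℝ,
        (∑ j, if j ∈ J then 0 else |Δ j|) ≤ (∑ j, if j ∈ J then |Δ j| else 0) →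
        ‖Δ‖ = 1 → κ ≤ ‖Ψ.mulVec Δ‖) :
    ∀ J : Finset (Fin p), J.card ≤ s →
      ∀ Δ : Fin p → ℝ,
        (∑ j, if j ∈ J then 0 else |Δ j|) ≤ (∑ j, if j ∈ J then |Δ j| else 0) →
        (∑ j, |Δ j| ^ q) ^ (1 / q) = 1 →
        ((2 * s : ℝ)) ^ (-(1 / q)) * κ ≤ ‖Ψ.mulVec Δ‖ :=
  sensitivity_q_vs_infty_general Ψ s q hq κ hκ
end

section
/- Let ζ and η be real random variables that are γ₁- and γ₂-subgaussian respectively (not necessarily independent), and suppose E[ζη] = 0. Then there exist constants γ > 0 and t₀ > 0 depending only on γ₁, γ₂ such that E[exp(t·ζη)] ≤ exp(γ²t²/2) for all |t| ≤ t₀, i.e., the product ζη is subexponential. -/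
/-!
Since `|ζη| ≤ (ζ² + η²)/2`, the moment `E[exp(c|ζη|)]` is controlled by `E[exp(cζ²)]` and
`E[exp(cη²)]`, which are finite for small `c`: writing `exp(cx²)` as a Gaussian average of
`exp(sx)` and exchanging the integrals reduces them to the subgaussian bound. A centred variable `X`
with `E[exp(c|X|)] < ∞` is subexponential, because `exp y ≤ 1 + y + y² exp|y|` gives
`E[exp(tX)] ≤ 1 + K t² ≤ exp(K t²)` for `|t| ≤ c/2`.
-/

open MeasureTheory Real
open scoped ENNReal

theorem exp_mul_sub_mul_sq_eq {b : ℝ} (hb : b ≠ 0) (x s : ℝ) :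
    exp (s * x - b * s ^ 2) = exp (x ^ 2 / (4 * b)) * exp (-b * (s - x / (2 * b)) ^ 2) := by
  rw [← exp_add]; congr 1; field_simp; ring

theorem integrable_exp_mul_sub_mul_sq {b : ℝ} (hb : 0 < b) (x : ℝ) :
    Integrable (fun s : ℝ => exp (s * x - b * s ^ 2)) := by
  simp_rw [exp_mul_sub_mul_sq_eq hb.ne']
  exact ((integrable_exp_neg_mul_sq hb).comp_sub_right _).const_mul _

theorem integral_exp_mul_sub_mul_sq {b : ℝ} (hb : 0 < b) (x : ℝ) :
    ∫ s : ℝ, exp (s * x - b * s ^ 2) = exp (x ^ 2 / (4 * b)) * √(π / b) := by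
  simp_rw [exp_mul_sub_mul_sq_eq hb.ne', integral_const_mul,
    integral_sub_right_eq_self (fun s : ℝ => exp (-b * s ^ 2)), integral_gaussian]

theorem lintegral_ofReal_exp_eq {α : Type*} [MeasurableSpace α] {μ : Measure α} {f : α → ℝ}
    (hf : Integrable (fun a => exp (f a)) μ) :
    ∫⁻ a, ENNReal.ofReal (exp (f a)) ∂μ = ENNReal.ofReal (∫ a, exp (f a) ∂μ) :=
  (ofReal_integral_eq_lintegral_ofReal hf (ae_of_all _ fun _ => (exp_pos _).le)).symm

theorem exp_le_one_add_add_sq_mul_exp_abs (y : ℝ) : exp y ≤ 1 + y + y ^ 2 * exp |y| := by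
  have hexp_abs : exp y ≤ exp |y| := exp_le_exp.mpr (le_abs_self y)
  rcases le_or_gt |y| 1 with hy | hy
  · have h := (abs_le.mp (abs_exp_sub_one_sub_id_le hy)).2
    have h1 : 1 ≤ exp |y| := one_le_exp (abs_nonneg y)
    nlinarith [sq_nonneg y]
  · have h := add_one_le_exp |y|
    have hsq : (y ^ 2 - 1) * (|y| + 1) ≤ (y ^ 2 - 1) * exp |y| :=
      mul_le_mul_of_nonneg_left h (by nlinarith [sq_abs y])
    nlinarith [neg_abs_le y, sq_abs y]

theorem sq_le_mul_exp_mul_abs {a : ℝ} (ha : 0 < a) (x : ℝ) :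
    x ^ 2 ≤ 2 / a ^ 2 * exp (a * |x|) := by
  have h := pow_div_factorial_le_exp (x := a * |x|) (mul_nonneg ha.le (abs_nonneg x)) 2
  rw [mul_pow, sq_abs] at h
  rw [div_mul_eq_mul_div, le_div_iff₀ (by positivity)]
  norm_num at h
  linarith

theorem exp_mul_le_one_add_add_sq_mul_exp_mul_abs {c t : ℝ} (hc : 0 < c) (ht : |t| ≤ c / 2)
    (x : ℝ) : exp (t * x) ≤ 1 + t * x + 8 / c ^ 2 * t ^ 2 * exp (c * |x|) := by
  have hx := sq_le_mul_exp_mul_abs (half_pos hc) x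
  have hexp : exp (|t * x|) ≤ exp (c / 2 * |x|) := by
    rw [abs_mul]; gcongr
  calc exp (t * x) ≤ 1 + t * x + t ^ 2 * (x ^ 2 * exp |t * x|) := by
        have := exp_le_one_add_add_sq_mul_exp_abs (t * x)
        rw [mul_pow] at this; linarith
    _ ≤ 1 + t * x + t ^ 2 * (2 / (c / 2) ^ 2 * exp (c / 2 * |x|) * exp (c / 2 * |x|)) := by
        gcongr
    _ = 1 + t * x + 8 / c ^ 2 * t ^ 2 * exp (c * |x|) := by
        rw [mul_assoc, ← exp_add]; ring_nf

theorem exp_mul_abs_mul_le {c : ℝ} (hc : 0 ≤ c) (x y : ℝ) :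
    exp (c * |x * y|) ≤ (exp (c * x ^ 2) + exp (c * y ^ 2)) / 2 := by
  have hxy : c * |x * y| ≤ c * x ^ 2 / 2 + c * y ^ 2 / 2 := by
    rw [abs_mul]
    nlinarith [sq_nonneg (|x| - |y|), sq_abs x, sq_abs y, mul_nonneg hc (sq_nonneg (|x| - |y|))]
  have hx : exp (c * x ^ 2) = exp (c * x ^ 2 / 2) ^ 2 := by rw [← exp_nat_mul]; ring_nf
  have hy : exp (c * y ^ 2) = exp (c * y ^ 2 / 2) ^ 2 := by rw [← exp_nat_mul]; ring_nf
  calc exp (c * |x * y|) ≤ exp (c * x ^ 2 / 2) * exp (c * y ^ 2 / 2) := by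
        rw [← exp_add]; exact exp_le_exp.mpr hxy
    _ ≤ _ := by
        rw [hx, hy]; nlinarith [sq_nonneg (exp (c * x ^ 2 / 2) - exp (c * y ^ 2 / 2))]

section

variable {Ω : Type*} [MeasurableSpace Ω] {μ : Measure Ω}

theorem integrable_exp_mul_sq_of_integral_exp_mul_le [SFinite μ] {ζ : Ω → ℝ} (hζ : Measurable ζ)
    {γ c : ℝ} (hc : 0 < c) (hcγ : 2 * c * γ ^ 2 < 1)
    (hint : ∀ t : ℝ, Integrable (fun ω => exp (t * ζ ω)) μ)
    (hmgf : ∀ t : ℝ, ∫ ω, exp (t * ζ ω) ∂μ ≤ exp (γ ^ 2 * t ^ 2 / 2)) :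
    Integrable (fun ω => exp (c * ζ ω ^ 2)) μ := by
  set b : ℝ := 1 / (4 * c)
  have hb : 0 < b := by positivity
  have hbγ : 0 < b - γ ^ 2 / 2 := by
    have : γ ^ 2 / 2 < 1 / (4 * c) := by
      rw [lt_div_iff₀ (by positivity)]; linarith
    linarith
  have hmix : ∀ x : ℝ, ∫⁻ s : ℝ, ENNReal.ofReal (exp (s * x - b * s ^ 2))
      = ENNReal.ofReal (√(π / b)) * ENNReal.ofReal (exp (c * x ^ 2)) := fun x => by
    rw [lintegral_ofReal_exp_eq (integrable_exp_mul_sub_mul_sq hb x),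
      integral_exp_mul_sub_mul_sq hb x, mul_comm, ENNReal.ofReal_mul (by positivity)]
    congr 3
    simp only [b]
    field_simp
  have hmgf_mul : ∀ s : ℝ, ∫ ω, exp (s * ζ ω - b * s ^ 2) ∂μ ≤ exp (-(b - γ ^ 2 / 2) * s ^ 2) :=
    fun s => calc
      ∫ ω, exp (s * ζ ω - b * s ^ 2) ∂μ = (∫ ω, exp (s * ζ ω) ∂μ) * exp (-(b * s ^ 2)) := by
          simp_rw [sub_eq_add_neg, exp_add, integral_mul_const]
      _ ≤ exp (γ ^ 2 * s ^ 2 / 2) * exp (-(b * s ^ 2)) := by gcongr; exact hmgf s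
      _ = exp (-(b - γ ^ 2 / 2) * s ^ 2) := by rw [← exp_add]; ring_nf
  have hint_mul : ∀ s : ℝ, Integrable (fun ω => exp (s * ζ ω - b * s ^ 2)) μ := fun s => by
    simp_rw [sub_eq_add_neg, exp_add]
    exact (hint s).mul_const _
  have hmeas : Measurable fun p : Ω × ℝ => ENNReal.ofReal (exp (p.2 * ζ p.1 - b * p.2 ^ 2)) := by
    fun_prop
  have hbound : ENNReal.ofReal (√(π / b)) * ∫⁻ ω, ENNReal.ofReal (exp (c * ζ ω ^ 2)) ∂μ
      ≤ ENNReal.ofReal (∫ s : ℝ, exp (-(b - γ ^ 2 / 2) * s ^ 2)) :=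
    calc ENNReal.ofReal (√(π / b)) * ∫⁻ ω, ENNReal.ofReal (exp (c * ζ ω ^ 2)) ∂μ
        = ∫⁻ ω, (∫⁻ s : ℝ, ENNReal.ofReal (exp (s * ζ ω - b * s ^ 2))) ∂μ := by
          simp_rw [hmix]
          exact (lintegral_const_mul _ (by fun_prop)).symm
      _ = ∫⁻ s : ℝ, ∫⁻ ω, ENNReal.ofReal (exp (s * ζ ω - b * s ^ 2)) ∂μ :=
          lintegral_lintegral_swap hmeas.aemeasurable
      _ ≤ ∫⁻ s : ℝ, ENNReal.ofReal (exp (-(b - γ ^ 2 / 2) * s ^ 2)) := by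
          refine lintegral_mono fun s => ?_
          rw [lintegral_ofReal_exp_eq (hint_mul s)]
          exact ENNReal.ofReal_le_ofReal (hmgf_mul s)
      _ = ENNReal.ofReal (∫ s : ℝ, exp (-(b - γ ^ 2 / 2) * s ^ 2)) :=
          lintegral_ofReal_exp_eq (integrable_exp_neg_mul_sq hbγ)
  refine ⟨by fun_prop, ?_⟩
  rw [hasFiniteIntegral_iff_ofReal (ae_of_all _ fun _ => (exp_pos _).le)]
  refine ENNReal.lt_top_of_mul_ne_top_right (hbound.trans_lt ENNReal.ofReal_lt_top).ne ?_
  simp only [ne_eq, ENNReal.ofReal_eq_zero, not_le]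
  positivity

theorem integrable_exp_mul_abs_mul_of_integrable_exp_mul_sq {ζ η : Ω → ℝ}
    (hζ : Measurable ζ) (hη : Measurable η) {c : ℝ} (hc : 0 ≤ c)
    (hζsq : Integrable (fun ω => exp (c * ζ ω ^ 2)) μ)
    (hηsq : Integrable (fun ω => exp (c * η ω ^ 2)) μ) :
    Integrable (fun ω => exp (c * |ζ ω * η ω|)) μ := by
  refine ((hζsq.add hηsq).div_const 2).mono' (by fun_prop) (ae_of_all _ fun ω => ?_)
  rw [norm_of_nonneg (exp_pos _).le]
  exact exp_mul_abs_mul_le hc _ _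

theorem exists_integral_exp_mul_le_of_integrable_exp_mul_abs [IsProbabilityMeasure μ]
    {X : Ω → ℝ} (hX : Integrable X μ) (hX0 : ∫ ω, X ω ∂μ = 0) {c : ℝ} (hc : 0 < c)
    (hexp : Integrable (fun ω => exp (c * |X ω|)) μ) :
    ∃ γ t₀ : ℝ, 0 < γ ∧ 0 < t₀ ∧
      ∀ t : ℝ, |t| ≤ t₀ →
        Integrable (fun ω => exp (t * X ω)) μ ∧
        ∫ ω, exp (t * X ω) ∂μ ≤ exp (γ ^ 2 * t ^ 2 / 2) := by
  set K : ℝ := 8 / c ^ 2 * ∫ ω, exp (c * |X ω|) ∂μ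
  have hK : 0 ≤ K := by
    have : 0 ≤ ∫ ω, exp (c * |X ω|) ∂μ := integral_nonneg fun ω => (exp_pos _).le
    positivity
  refine ⟨√(2 * K + 1), c / 2, by positivity, by positivity, fun t ht => ?_⟩
  have hint : Integrable (fun ω => exp (t * X ω)) μ := by
    refine hexp.mono' (by fun_prop) (ae_of_all _ fun ω => ?_)
    rw [norm_of_nonneg (exp_pos _).le]
    refine exp_le_exp.mpr ((le_abs_self _).trans ?_)
    rw [abs_mul]
    gcongr
    linarith
  have hlin : Integrable (fun ω => 1 + t * X ω) μ := (integrable_const 1).add (hX.const_mul t)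
  refine ⟨hint, ?_⟩
  calc ∫ ω, exp (t * X ω) ∂μ
      ≤ ∫ ω, (1 + t * X ω + 8 / c ^ 2 * t ^ 2 * exp (c * |X ω|)) ∂μ :=
        integral_mono hint (hlin.add (hexp.const_mul _)) fun ω =>
          exp_mul_le_one_add_add_sq_mul_exp_mul_abs hc ht (X ω)
    _ = 1 + K * t ^ 2 := by
        rw [integral_add hlin (hexp.const_mul _),
          integral_add (integrable_const 1) (hX.const_mul t), integral_const_mul,
          integral_const_mul, hX0]
        simp only [K, integral_const, probReal_univ, smul_eq_mul]
        ring
    _ ≤ exp (K * t ^ 2) := by linarith [add_one_le_exp (K * t ^ 2)]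
    _ ≤ exp (√(2 * K + 1) ^ 2 * t ^ 2 / 2) := by
        rw [sq_sqrt (by positivity)]
        gcongr
        nlinarith [sq_nonneg t]

end

theorem product_subgaussian_is_subexponential_general {Ω : Type*} [MeasurableSpace Ω]
    (μ : Measure Ω) [IsProbabilityMeasure μ]
    (ζ η : Ω → ℝ) (hζm : Measurable ζ) (hηm : Measurable η)
    (γ₁ γ₂ : ℝ)
    (hζint : ∀ t : ℝ, Integrable (fun ω => exp (t * ζ ω)) μ)
    (hηint : ∀ t : ℝ, Integrable (fun ω => exp (t * η ω)) μ)
    (hζ : ∀ t : ℝ, ∫ ω, exp (t * ζ ω) ∂μ ≤ exp (γ₁ ^ 2 * t ^ 2 / 2))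
    (hη : ∀ t : ℝ, ∫ ω, exp (t * η ω) ∂μ ≤ exp (γ₂ ^ 2 * t ^ 2 / 2))
    (hprodint : Integrable (fun ω => ζ ω * η ω) μ)
    (hzero : ∫ ω, ζ ω * η ω ∂μ = 0) :
    ∃ γ t₀ : ℝ, 0 < γ ∧ 0 < t₀ ∧
      ∀ t : ℝ, |t| ≤ t₀ →
        Integrable (fun ω => exp (t * (ζ ω * η ω))) μ ∧
        ∫ ω, exp (t * (ζ ω * η ω)) ∂μ ≤ exp (γ ^ 2 * t ^ 2 / 2) := by
  set c : ℝ := 1 / (2 * (γ₁ ^ 2 + γ₂ ^ 2) + 1)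
  have hc : 0 < c := by positivity
  have hcγ : ∀ γ : ℝ, γ ^ 2 ≤ γ₁ ^ 2 + γ₂ ^ 2 → 2 * c * γ ^ 2 < 1 := fun γ hγ => by
    rw [mul_comm 2, mul_assoc, one_div_mul_eq_div, div_lt_one (by positivity)]
    linarith
  have hζsq := integrable_exp_mul_sq_of_integral_exp_mul_le hζm hc
    (hcγ γ₁ (le_add_of_nonneg_right (sq_nonneg γ₂))) hζint hζ
  have hηsq := integrable_exp_mul_sq_of_integral_exp_mul_le hηm hc
    (hcγ γ₂ (le_add_of_nonneg_left (sq_nonneg γ₁))) hηint hη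
  exact exists_integral_exp_mul_le_of_integrable_exp_mul_abs hprodint hzero hc
    (integrable_exp_mul_abs_mul_of_integrable_exp_mul_sq hζm hηm hc.le hζsq hηsq)

/-- the product of two (not necessarily independent) subgaussian
random variables with E[ζη] = 0 is subexponential. -/
theorem product_subgaussian_is_subexponential {Ω : Type*} [MeasurableSpace Ω]
    (μ : Measure Ω) [IsProbabilityMeasure μ]
    (ζ η : Ω → ℝ) (hζm : Measurable ζ) (hηm : Measurable η)
    (γ₁ γ₂ : ℝ) (hγ₁ : 0 < γ₁) (hγ₂ : 0 < γ₂)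
    (hζint : ∀ t : ℝ, Integrable (fun ω => exp (t * ζ ω)) μ)
    (hηint : ∀ t : ℝ, Integrable (fun ω => exp (t * η ω)) μ)
    (hζ : ∀ t : ℝ, ∫ ω, exp (t * ζ ω) ∂μ ≤ exp (γ₁ ^ 2 * t ^ 2 / 2))
    (hη : ∀ t : ℝ, ∫ ω, exp (t * η ω) ∂μ ≤ exp (γ₂ ^ 2 * t ^ 2 / 2))
    (hprodint : Integrable (fun ω => ζ ω * η ω) μ)
    (hzero : ∫ ω, ζ ω * η ω ∂μ = 0) :
    ∃ γ t₀ : ℝ, 0 < γ ∧ 0 < t₀ ∧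
      ∀ t : ℝ, |t| ≤ t₀ →
        Integrable (fun ω => exp (t * (ζ ω * η ω))) μ ∧
        ∫ ω, exp (t * (ζ ω * η ω)) ∂μ ≤ exp (γ ^ 2 * t ^ 2 / 2) :=
  product_subgaussian_is_subexponential_general μ ζ η hζm hηm γ₁ γ₂ hζint hηint hζ hη hprodint hzero
end

section
/- Let Ψ be a p×p matrix satisfying the restricted eigenvalue condition: there is κ_RE(s) > 0 such that |Δ^T Ψ Δ| ≥ κ_RE(s)|Δ_J|_2² for all J with |J| ≤ s and all Δ ∈ C_J = {Δ : |Δ_{J^c}|_1 ≤ |Δ_J|_1}. Then the ℓ_1 sensitivity satisfies κ_1(s) := min_{|J|≤s} min_{Δ∈C_J, |Δ|_1=1} |ΨΔ|_∞ ≥ κ_RE(s)/(4s). -/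
/-!
On the cone `C_J` the off-support mass is at most the on-support mass, so
`|Δ|₁ ≤ 2 |Δ_J|₁ ≤ 2 √s |Δ_J|₂` by Cauchy–Schwarz. Combining the restricted eigenvalue bound with
Hölder's inequality `|Δᵀ Ψ Δ| ≤ |Δ|₁ |ΨΔ|_∞` then gives `κ_RE |Δ|₁² ≤ 4 s |Δ|₁ |ΨΔ|_∞`.
-/

open Matrix Finset

section Cone

variable {ι : Type*} [Fintype ι] [DecidableEq ι]

lemma sum_abs_le_two_mul_sum_abs_of_mem_cone (J : Finset ι) (Δ : ι → ℝ)
    (hcone : (∑ j, if j ∈ J then 0 else |Δ j|) ≤ ∑ j, if j ∈ J then |Δ j| else 0) :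
    ∑ j, |Δ j| ≤ 2 * ∑ j ∈ J, |Δ j| := by
  have hsplit : ∑ j, |Δ j| =
      (∑ j, if j ∈ J then |Δ j| else 0) + ∑ j, if j ∈ J then 0 else |Δ j| := by
    rw [← sum_add_distrib]
    exact sum_congr rfl fun j _ ↦ by split_ifs <;> simp
  have hsupp : (∑ j, if j ∈ J then |Δ j| else 0) = ∑ j ∈ J, |Δ j| := by
    rw [sum_ite_mem, univ_inter]
  linarith

lemma sq_sum_abs_le_four_mul_card_mul_sum_sq_of_mem_cone (J : Finset ι) (Δ : ι → ℝ)
    (hcone : (∑ j, if j ∈ J then 0 else |Δ j|) ≤ ∑ j, if j ∈ J then |Δ j| else 0) :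
    (∑ j, |Δ j|) ^ 2 ≤ 4 * #J * ∑ j ∈ J, Δ j ^ 2 := by
  have hl1 := sum_abs_le_two_mul_sum_abs_of_mem_cone J Δ hcone
  have hcs : (∑ j ∈ J, |Δ j|) ^ 2 ≤ #J * ∑ j ∈ J, Δ j ^ 2 := by
    simpa only [sq_abs] using sq_sum_le_card_mul_sum_sq (s := J) (f := fun j ↦ |Δ j|)
  calc (∑ j, |Δ j|) ^ 2 ≤ (2 * ∑ j ∈ J, |Δ j|) ^ 2 :=
        pow_le_pow_left₀ (sum_nonneg fun j _ ↦ abs_nonneg _) hl1 2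
    _ ≤ 4 * #J * ∑ j ∈ J, Δ j ^ 2 := by nlinarith

end Cone

lemma abs_dotProduct_le_sum_abs_mul_norm {ι : Type*} [Fintype ι] (x y : ι → ℝ) :
    |x ⬝ᵥ y| ≤ (∑ j, |x j|) * ‖y‖ :=
  calc |x ⬝ᵥ y| ≤ ∑ j, |x j * y j| := abs_sum_le_sum_abs _ _
    _ ≤ ∑ j, |x j| * ‖y‖ := sum_le_sum fun j _ ↦ by
        rw [abs_mul, ← Real.norm_eq_abs (y j)]
        exact mul_le_mul_of_nonneg_left (norm_le_pi_norm y j) (abs_nonneg _)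
    _ = (∑ j, |x j|) * ‖y‖ := (sum_mul _ _ _).symm

lemma mul_sum_abs_le_four_mul_card_mul_norm_mulVec {ι : Type*} [Fintype ι] [DecidableEq ι]
    (Ψ : Matrix ι ι ℝ) (κ : ℝ) (hκ : 0 ≤ κ) (J : Finset ι) (Δ : ι → ℝ)
    (hcone : (∑ j, if j ∈ J then 0 else |Δ j|) ≤ ∑ j, if j ∈ J then |Δ j| else 0)
    (hRE : κ * ∑ j ∈ J, Δ j ^ 2 ≤ |Δ ⬝ᵥ Ψ *ᵥ Δ|) :
    κ * ∑ j, |Δ j| ≤ 4 * #J * ‖Ψ *ᵥ Δ‖ := by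
  rcases (sum_nonneg fun j _ ↦ abs_nonneg (Δ j) : 0 ≤ ∑ j, |Δ j|).eq_or_lt with hzero | hpos
  · rw [← hzero, mul_zero]
    positivity
  refine le_of_mul_le_mul_right ?_ hpos
  calc κ * (∑ j, |Δ j|) * ∑ j, |Δ j| = κ * (∑ j, |Δ j|) ^ 2 := by ring
    _ ≤ κ * (4 * #J * ∑ j ∈ J, Δ j ^ 2) :=
        mul_le_mul_of_nonneg_left (sq_sum_abs_le_four_mul_card_mul_sum_sq_of_mem_cone J Δ hcone) hκ
    _ = 4 * #J * (κ * ∑ j ∈ J, Δ j ^ 2) := by ring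
    _ ≤ 4 * #J * ((∑ j, |Δ j|) * ‖Ψ *ᵥ Δ‖) :=
        mul_le_mul_of_nonneg_left (hRE.trans (abs_dotProduct_le_sum_abs_mul_norm Δ _))
          (by positivity)
    _ = 4 * #J * ‖Ψ *ᵥ Δ‖ * ∑ j, |Δ j| := by ring

theorem re_implies_l1_sensitivity_general {p : ℕ} (Ψ : Matrix (Fin p) (Fin p) ℝ)
    (s : ℕ) (κRE : ℝ) (hκRE : 0 < κRE)
    (hRE : ∀ J : Finset (Fin p), J.card ≤ s →
      ∀ Δ : Fin p → ℝ,
        (∑ j, if j ∈ J then 0 else |Δ j|) ≤ (∑ j, if j ∈ J then |Δ j| else 0) →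
        κRE * (∑ j ∈ J, (Δ j) ^ 2) ≤ |Δ ⬝ᵥ Ψ.mulVec Δ|) :
    ∀ J : Finset (Fin p), J.card ≤ s →
      ∀ Δ : Fin p → ℝ,
        (∑ j, if j ∈ J then 0 else |Δ j|) ≤ (∑ j, if j ∈ J then |Δ j| else 0) →
        (∑ j, |Δ j|) = 1 →
        κRE / (4 * s) ≤ ‖Ψ.mulVec Δ‖ := by
  intro J hJ Δ hcone hunit
  have hbound := mul_sum_abs_le_four_mul_card_mul_norm_mulVec Ψ κRE hκRE.le J Δ hcone
    (hRE J hJ Δ hcone)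
  rw [hunit, mul_one] at hbound
  refine div_le_of_le_mul₀ (by positivity) (norm_nonneg _) ?_
  calc κRE ≤ 4 * #J * ‖Ψ *ᵥ Δ‖ := hbound
    _ ≤ 4 * s * ‖Ψ *ᵥ Δ‖ := by gcongr
    _ = ‖Ψ *ᵥ Δ‖ * (4 * s) := mul_comm _ _

/-- the RE condition implies κ₁(s) ≥ κ_RE(s)/(4s)
(lower-bound formulation of the sensitivity). -/
theorem re_implies_l1_sensitivity {p : ℕ} (Ψ : Matrix (Fin p) (Fin p) ℝ)
    (s : ℕ) (hs : 1 ≤ s) (κRE : ℝ) (hκRE : 0 < κRE)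
    (hRE : ∀ J : Finset (Fin p), J.card ≤ s →
      ∀ Δ : Fin p → ℝ,
        (∑ j, if j ∈ J then 0 else |Δ j|) ≤ (∑ j, if j ∈ J then |Δ j| else 0) →
        κRE * (∑ j ∈ J, (Δ j) ^ 2) ≤ |Δ ⬝ᵥ Ψ.mulVec Δ|) :
    ∀ J : Finset (Fin p), J.card ≤ s →
      ∀ Δ : Fin p → ℝ,
        (∑ j, if j ∈ J then 0 else |Δ j|) ≤ (∑ j, if j ∈ J then |Δ j| else 0) →
        (∑ j, |Δ j|) = 1 →
        κRE / (4 * s) ≤ ‖Ψ.mulVec Δ‖ :=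
  re_implies_l1_sensitivity_general Ψ s κRE hκRE hRE
end

section
/- Let X be an n×p matrix, θ*, θ̂ ∈ ℝ^p with |θ̂|_1 ≤ |θ*|_1, and suppose Δ = θ̂ - θ* satisfies |(1/n)X^T X Δ|_∞ ≤ ν for some ν ≥ 0. Then the prediction error satisfies (1/n)|XΔ|_2² ≤ 2ν|θ*|_1. -/
open Matrix

theorem Matrix.dotProduct_mulVec_transpose_mul_self {m n R : Type*} [Fintype m] [Fintype n]
    [CommSemiring R] (X : Matrix m n R) (v : n → R) :
    v ⬝ᵥ (Xᵀ * X) *ᵥ v = (X *ᵥ v) ⬝ᵥ (X *ᵥ v) := by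
  rw [← mulVec_mulVec, mulVec_transpose, dotProduct_comm, ← dotProduct_mulVec]

theorem Matrix.dotProduct_le_sum_abs_mul_norm {ι : Type*} [Fintype ι] (x y : ι → ℝ) :
    x ⬝ᵥ y ≤ (∑ i, |x i|) * ‖y‖ := by
  rw [dotProduct, Finset.sum_mul]
  refine Finset.sum_le_sum fun i _ => ?_
  calc x i * y i ≤ |x i| * |y i| := by rw [← abs_mul]; exact le_abs_self _
    _ ≤ |x i| * ‖y‖ := by gcongr; exact norm_le_pi_norm y i

theorem Finset.sum_abs_sub_le {ι : Type*} (s : Finset ι) (a b : ι → ℝ) :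
    ∑ i ∈ s, |a i - b i| ≤ ∑ i ∈ s, |a i| + ∑ i ∈ s, |b i| := by
  rw [← Finset.sum_add_distrib]
  exact Finset.sum_le_sum fun i _ => abs_sub _ _

theorem prediction_bound_general {n p : ℕ} (X : Matrix (Fin n) (Fin p) ℝ)
    (θs θh : Fin p → ℝ) (ν : ℝ)
    (h1 : (∑ j, |θh j|) ≤ ∑ j, |θs j|)
    (hinf : ‖(1 / (n : ℝ)) • ((Xᵀ * X).mulVec (θh - θs))‖ ≤ ν) :
    (1 / (n : ℝ)) * ∑ i, (X.mulVec (θh - θs) i) ^ 2 ≤ 2 * ν * ∑ j, |θs j| := by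
  set Δ := θh - θs
  have hΔ : ∑ j, |Δ j| ≤ 2 * ∑ j, |θs j| := by
    have := Finset.univ.sum_abs_sub_le θh θs
    simp only [Δ, Pi.sub_apply]
    linarith
  calc (1 / (n : ℝ)) * ∑ i, (X *ᵥ Δ) i ^ 2
      = Δ ⬝ᵥ (1 / (n : ℝ)) • ((Xᵀ * X) *ᵥ Δ) := by
        rw [dotProduct_smul, dotProduct_mulVec_transpose_mul_self, smul_eq_mul]
        simp only [dotProduct, sq]
    _ ≤ (∑ j, |Δ j|) * ‖(1 / (n : ℝ)) • ((Xᵀ * X) *ᵥ Δ)‖ := dotProduct_le_sum_abs_mul_norm _ _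
    _ ≤ (2 * ∑ j, |θs j|) * ν := by gcongr
    _ = 2 * ν * ∑ j, |θs j| := by ring

/-- assumption-free prediction bound. -/
theorem prediction_bound {n p : ℕ} (X : Matrix (Fin n) (Fin p) ℝ)
    (θs θh : Fin p → ℝ) (ν : ℝ) (hν : 0 ≤ ν)
    (h1 : (∑ j, |θh j|) ≤ ∑ j, |θs j|)
    (hinf : ‖(1 / (n : ℝ)) • ((Xᵀ * X).mulVec (θh - θs))‖ ≤ ν) :
    (1 / (n : ℝ)) * ∑ i, (X.mulVec (θh - θs) i) ^ 2 ≤ 2 * ν * ∑ j, |θs j| :=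
  prediction_bound_general X θs θh ν h1 hinf
end

section
/- Let Ψ be a p×p matrix, θ* an s-sparse vector with support J, and θ̂ with |θ̂|_1 ≤ |θ*|_1. Suppose |ΨΔ|_∞ ≤ ν where Δ = θ̂ - θ*, and suppose the sensitivity κ_q(s) = min_{|J'|≤s} min_{Δ'∈C_{J'}, |Δ'|_q=1} |ΨΔ'|_∞ is positive. Then |θ̂ - θ*|_q ≤ ν/κ_q(s). -/
/-!
Since `|θ̂|₁ ≤ |θ*|₁` and `θ*` vanishes off its support `J`, the error `Δ = θ̂ - θ*` lies in the
cone `C_J`. The cone and `Ψ` commute with positive scaling, so applying the sensitivity bound to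
`Δ / |Δ|_q` gives `κ |Δ|_q ≤ |ΨΔ|_∞ ≤ ν`.
-/

open Matrix

section

variable {ι : Type*} [Fintype ι]

noncomputable def lqNorm (q : ℝ) (x : ι → ℝ) : ℝ :=
  (∑ j, |x j| ^ q) ^ (1 / q)

variable {q : ℝ}

theorem lqNorm_zero (hq : q ≠ 0) : lqNorm q (0 : ι → ℝ) = 0 := by
  simp [lqNorm, Real.zero_rpow hq, Real.zero_rpow (inv_ne_zero hq)]

theorem lqNorm_pos {x : ι → ℝ} (hx : x ≠ 0) : 0 < lqNorm q x := by
  obtain ⟨j₀, hj₀⟩ := Function.ne_iff.mp hx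
  have hsum : 0 < ∑ j, |x j| ^ q :=
    Finset.sum_pos' (fun j _ => by positivity)
      ⟨j₀, Finset.mem_univ _, Real.rpow_pos_of_pos (abs_pos.mpr hj₀) q⟩
  exact Real.rpow_pos_of_pos hsum _

theorem lqNorm_smul_of_nonneg (hq : q ≠ 0) {c : ℝ} (hc : 0 ≤ c) (x : ι → ℝ) :
    lqNorm q (c • x) = c * lqNorm q x := by
  have hterm : ∀ j, |(c • x) j| ^ q = c ^ q * |x j| ^ q := fun j => by
    rw [Pi.smul_apply, smul_eq_mul, abs_mul, abs_of_nonneg hc, Real.mul_rpow hc (abs_nonneg _)]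
  rw [lqNorm, lqNorm, Finset.sum_congr rfl fun j _ => hterm j, ← Finset.mul_sum,
    Real.mul_rpow (by positivity) (Finset.sum_nonneg fun j _ => by positivity),
    ← Real.rpow_mul hc, mul_one_div_cancel hq, Real.rpow_one]

variable [DecidableEq ι]

/-- The paper's cone `C_J`. -/
def restrictedCone (J : Finset ι) : Set (ι → ℝ) :=
  {Δ | (∑ j, if j ∈ J then 0 else |Δ j|) ≤ ∑ j, if j ∈ J then |Δ j| else 0}

theorem smul_mem_restrictedCone {J : Finset ι} {Δ : ι → ℝ} (hΔ : Δ ∈ restrictedCone J)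
    {c : ℝ} (hc : 0 ≤ c) : c • Δ ∈ restrictedCone J := by
  have habs : ∀ j, |(c • Δ) j| = c * |Δ j| := fun j => by
    rw [Pi.smul_apply, smul_eq_mul, abs_mul, abs_of_nonneg hc]
  have hout : (∑ j, if j ∈ J then 0 else |(c • Δ) j|)
      = c * ∑ j, if j ∈ J then 0 else |Δ j| := by
    simp only [habs, Finset.mul_sum, mul_ite, mul_zero]
  have hin : (∑ j, if j ∈ J then |(c • Δ) j| else 0)
      = c * ∑ j, if j ∈ J then |Δ j| else 0 := by
    simp only [habs, Finset.mul_sum, mul_ite, mul_zero]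
  simp only [restrictedCone, Set.mem_ofPred_eq] at hΔ ⊢
  rw [hout, hin]
  exact mul_le_mul_of_nonneg_left hΔ hc

theorem sub_mem_restrictedCone {J : Finset ι} {θh θs : ι → ℝ}
    (hsupp : ∀ j ∉ J, θs j = 0) (hl1 : ∑ j, |θh j| ≤ ∑ j, |θs j|) :
    θh - θs ∈ restrictedCone J := by
  have hpoint : ∀ j, (if j ∈ J then 0 else |(θh - θs) j|) + |θs j|
      ≤ (if j ∈ J then |(θh - θs) j| else 0) + |θh j| := fun j => by
    by_cases hj : j ∈ J
    · simp only [hj, if_true, zero_add, Pi.sub_apply]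
      linarith [abs_sub_abs_le_abs_sub (θs j) (θh j), abs_sub_comm (θh j) (θs j)]
    · simp [hj, hsupp j hj]
  have hsum := Finset.sum_le_sum fun j (_ : j ∈ Finset.univ) => hpoint j
  simp only [Finset.sum_add_distrib] at hsum
  rw [restrictedCone, Set.mem_ofPred_eq]
  linarith

end

/-- Homogeneity upgrades the sensitivity bound on the unit `ℓ_q` sphere to the whole cone. -/
theorem mul_lqNorm_le_norm_mulVec {ι m : Type*} [Fintype ι] [DecidableEq ι] [Fintype m]
    {q : ℝ} (hq : q ≠ 0) (Ψ : Matrix m ι ℝ) {J : Finset ι} {κ : ℝ}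
    (hsens : ∀ Δ ∈ restrictedCone J, lqNorm q Δ = 1 → κ ≤ ‖Ψ *ᵥ Δ‖)
    {Δ : ι → ℝ} (hΔ : Δ ∈ restrictedCone J) :
    κ * lqNorm q Δ ≤ ‖Ψ *ᵥ Δ‖ := by
  rcases eq_or_ne Δ 0 with rfl | hΔ0
  · rw [lqNorm_zero hq, mul_zero]
    exact norm_nonneg _
  set t := lqNorm q Δ
  have ht : 0 < t := lqNorm_pos hΔ0
  have hunit : lqNorm q (t⁻¹ • Δ) = 1 := by
    rw [lqNorm_smul_of_nonneg hq (inv_nonneg.mpr ht.le), inv_mul_cancel₀ ht.ne']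
  have hκ := hsens _ (smul_mem_restrictedCone hΔ (inv_nonneg.mpr ht.le)) hunit
  rw [mulVec_smul, norm_smul, Real.norm_of_nonneg (inv_nonneg.mpr ht.le)] at hκ
  calc κ * t ≤ t⁻¹ * ‖Ψ *ᵥ Δ‖ * t := mul_le_mul_of_nonneg_right hκ ht.le
    _ = ‖Ψ *ᵥ Δ‖ := by field_simp

/-- deterministic core of Theorem 1: |θ̂ - θ*|_q ≤ ν/κ_q(s). -/
theorem lq_estimation_bound {p : ℕ} (Ψ : Matrix (Fin p) (Fin p) ℝ)
    (s : ℕ) (θs θh : Fin p → ℝ)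
    (hsparse : (Finset.univ.filter fun j => θs j ≠ 0).card ≤ s)
    (h1 : (∑ j, |θh j|) ≤ ∑ j, |θs j|)
    (q : ℝ) (hq : 1 ≤ q) (κ : ℝ) (hκ : 0 < κ)
    (hsens : ∀ J : Finset (Fin p), J.card ≤ s →
      ∀ Δ : Fin p → ℝ,
        (∑ j, if j ∈ J then 0 else |Δ j|) ≤ (∑ j, if j ∈ J then |Δ j| else 0) →
        (∑ j, |Δ j| ^ q) ^ (1 / q) = 1 → κ ≤ ‖Ψ.mulVec Δ‖)
    (ν : ℝ) (hΨ : ‖Ψ.mulVec (θh - θs)‖ ≤ ν) :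
    (∑ j, |θh j - θs j| ^ q) ^ (1 / q) ≤ ν / κ := by
  set J := Finset.univ.filter fun j => θs j ≠ 0
  have hsupp : ∀ j ∉ J, θs j = 0 := fun j hj => by
    simpa [J] using hj
  have hcone : θh - θs ∈ restrictedCone J := sub_mem_restrictedCone hsupp h1
  have hbound : κ * lqNorm q (θh - θs) ≤ ‖Ψ *ᵥ (θh - θs)‖ :=
    mul_lqNorm_le_norm_mulVec (by linarith) Ψ
      (fun Δ hΔ hunit => hsens J hsparse Δ hΔ hunit) hcone
  rw [le_div_iff₀ hκ, mul_comm]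
  exact hbound.trans hΨ
end

section
/- Let Ψ̂ be a p×p matrix, θ*, θ̂ ∈ ℝ^p with θ* s-sparse and |θ̂|_1 ≤ |θ*|_1, and let Δ = θ* - θ̂. Suppose |Ψ̂Δ|_∞ ≤ 2(μ|θ̂|_1 + τ) + μ|Δ|_1 for constants μ, τ ≥ 0, and let κ̂_1(s), κ̂_q(s) > 0 be the ℓ_1 and ℓ_q sensitivities of Ψ̂ relative to cones of order s, with μ < κ̂_1(s). Then |θ̂ - θ*|_q ≤ 2(μ|θ̂|_1 + τ) / (κ̂_q(s)(1 - μ/κ̂_1(s))). -/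
/-!
Since `θ̂` is no longer in `ℓ₁` than the `s`-sparse `θ*`, the error `Δ = θ* - θ̂` lies in the cone
`C_J` of `J = supp θ*`. On that cone the sensitivities give `κ̂₁ |Δ|₁ ≤ |Ψ̂Δ|_∞` and
`κ̂_q |Δ|_q ≤ |Ψ̂Δ|_∞`. Feeding the first into the hypothesis bounds `μ |Δ|₁`, hence `|Ψ̂Δ|_∞`,
and the second turns that into the bound on `|Δ|_q`.
-/

variable {ι : Type*} [Fintype ι]

theorem sum_abs_smul {c : ℝ} (hc : 0 ≤ c) (x : ι → ℝ) :
    ∑ j, |(c • x) j| = c * ∑ j, |x j| := by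
  simp only [Pi.smul_apply, smul_eq_mul, abs_mul, abs_of_nonneg hc, Finset.mul_sum]

theorem sum_abs_rpow_rpow_smul {q : ℝ} (hq : q ≠ 0) {c : ℝ} (hc : 0 ≤ c) (x : ι → ℝ) :
    (∑ j, |(c • x) j| ^ q) ^ (1 / q) = c * (∑ j, |x j| ^ q) ^ (1 / q) := by
  simp only [Pi.smul_apply, smul_eq_mul, abs_mul, abs_of_nonneg hc,
    Real.mul_rpow hc (abs_nonneg _), ← Finset.mul_sum]
  rw [Real.mul_rpow (Real.rpow_nonneg hc _)
      (Finset.sum_nonneg fun j _ => Real.rpow_nonneg (abs_nonneg _) _),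
    one_div, Real.rpow_rpow_inv hc hq]

section

variable [DecidableEq ι]

/-- The cone `C_J = {Δ : |Δ_{Jᶜ}|₁ ≤ |Δ_J|₁}`, written as in the sensitivity hypotheses. -/
def sparsityCone (J : Finset ι) : Set (ι → ℝ) :=
  {Δ | (∑ j, if j ∈ J then 0 else |Δ j|) ≤ ∑ j, if j ∈ J then |Δ j| else 0}

theorem smul_mem_sparsityCone {J : Finset ι} {c : ℝ} (hc : 0 ≤ c) {Δ : ι → ℝ}
    (hΔ : Δ ∈ sparsityCone J) : c • Δ ∈ sparsityCone J := by
  have hscale : ∀ j, ((if j ∈ J then 0 else |(c • Δ) j|) = c * if j ∈ J then 0 else |Δ j|) ∧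
      ((if j ∈ J then |(c • Δ) j| else 0) = c * if j ∈ J then |Δ j| else 0) := by
    intro j
    split_ifs <;> simp [abs_mul, abs_of_nonneg hc]
  simp only [sparsityCone, Set.mem_ofPred_eq, fun j => (hscale j).1, fun j => (hscale j).2,
    ← Finset.mul_sum] at hΔ ⊢
  exact mul_le_mul_of_nonneg_left hΔ hc

/-- Off `J` the error is `-θ'`, and on `J` the reverse triangle inequality pays for the rest. -/
theorem sub_mem_sparsityCone {J : Finset ι} {θ θ' : ι → ℝ} (hsupp : ∀ j ∉ J, θ j = 0)
    (hl1 : ∑ j, |θ' j| ≤ ∑ j, |θ j|) : θ - θ' ∈ sparsityCone J := by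
  have hpointwise : ∀ j, (if j ∈ J then 0 else |(θ - θ') j|)
      - (if j ∈ J then |(θ - θ') j| else 0) ≤ |θ' j| - |θ j| := by
    intro j
    by_cases hj : j ∈ J
    · simp only [hj, if_true, Pi.sub_apply]
      linarith [abs_sub_abs_le_abs_sub (θ j) (θ' j)]
    · simp [hj, hsupp j hj]
  have := Finset.sum_le_sum fun j (_ : j ∈ Finset.univ) => hpointwise j
  simp only [Finset.sum_sub_distrib] at this
  exact sub_nonpos.1 (this.trans (sub_nonpos.2 hl1))

end

theorem mul_le_norm_of_forall_eq_one {E F : Type*} [AddCommGroup E] [Module ℝ E]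
    [SeminormedAddCommGroup F] [NormedSpace ℝ F] (A : E →ₗ[ℝ] F) {N : E → ℝ}
    (hN_nonneg : ∀ x, 0 ≤ N x) (hN_smul : ∀ c : ℝ, 0 ≤ c → ∀ x, N (c • x) = c * N x)
    {C : Set E} (hC : ∀ c : ℝ, 0 ≤ c → ∀ x ∈ C, c • x ∈ C) {κ : ℝ}
    (hκ : ∀ x ∈ C, N x = 1 → κ ≤ ‖A x‖) {x : E} (hx : x ∈ C) : κ * N x ≤ ‖A x‖ := by
  rcases (hN_nonneg x).eq_or_lt with hzero | hpos
  · rw [← hzero, mul_zero]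
    exact norm_nonneg _
  have hinv : 0 ≤ (N x)⁻¹ := inv_nonneg.2 hpos.le
  have hunit := hκ _ (hC _ hinv x hx) (by rw [hN_smul _ hinv, inv_mul_cancel₀ hpos.ne'])
  rw [map_smul, norm_smul, Real.norm_of_nonneg hinv, ← div_eq_inv_mul, le_div_iff₀ hpos] at hunit
  exact hunit

theorem le_div_of_sensitivity_bounds {X t r B μ κ₁ κq : ℝ} (hμ : 0 ≤ μ) (hμκ : μ < κ₁)
    (hκq : 0 < κq) (ht : κ₁ * t ≤ X) (hr : κq * r ≤ X) (hX : X ≤ B + μ * t) :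
    r ≤ B / (κq * (1 - μ / κ₁)) := by
  have hκ₁ : 0 < κ₁ := hμ.trans_lt hμκ
  have hgap : 0 < κ₁ - μ := sub_pos.2 hμκ
  have hμt : (κ₁ - μ) * (μ * t) ≤ μ * B := by nlinarith
  have hrκ : (κ₁ - μ) * (κq * r) ≤ κ₁ * B := by nlinarith
  rw [le_div_iff₀ (mul_pos hκq (by rwa [sub_pos, div_lt_one hκ₁])), one_sub_div hκ₁.ne']
  rw [show r * (κq * ((κ₁ - μ) / κ₁)) = (κ₁ - μ) * (κq * r) / κ₁ by ring, div_le_iff₀ hκ₁]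
  linarith

theorem confidence_interval_bound_general {p : ℕ} (Ψ : Matrix (Fin p) (Fin p) ℝ)
    (s : ℕ) (θs θh : Fin p → ℝ)
    (hsparse : (Finset.univ.filter fun j => θs j ≠ 0).card ≤ s)
    (h1 : (∑ j, |θh j|) ≤ ∑ j, |θs j|)
    (μ τ : ℝ) (hμ : 0 ≤ μ)
    (q : ℝ) (hq : 1 ≤ q) (κ1 κq : ℝ) (hκq : 0 < κq)
    (hμκ : μ < κ1)
    (hsens1 : ∀ J : Finset (Fin p), J.card ≤ s →
      ∀ Δ : Fin p → ℝ,
        (∑ j, if j ∈ J then 0 else |Δ j|) ≤ (∑ j, if j ∈ J then |Δ j| else 0) →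
        (∑ j, |Δ j|) = 1 → κ1 ≤ ‖Ψ.mulVec Δ‖)
    (hsensq : ∀ J : Finset (Fin p), J.card ≤ s →
      ∀ Δ : Fin p → ℝ,
        (∑ j, if j ∈ J then 0 else |Δ j|) ≤ (∑ j, if j ∈ J then |Δ j| else 0) →
        (∑ j, |Δ j| ^ q) ^ (1 / q) = 1 → κq ≤ ‖Ψ.mulVec Δ‖)
    (hΨ : ‖Ψ.mulVec (θs - θh)‖
        ≤ 2 * (μ * (∑ j, |θh j|) + τ) + μ * ∑ j, |θs j - θh j|) :
    (∑ j, |θh j - θs j| ^ q) ^ (1 / q)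
      ≤ 2 * (μ * (∑ j, |θh j|) + τ) / (κq * (1 - μ / κ1)) := by
  have hq0 : q ≠ 0 := by positivity
  have hcone : θs - θh ∈ sparsityCone (Finset.univ.filter fun j => θs j ≠ 0) :=
    sub_mem_sparsityCone (by simp) h1
  have hl1 := mul_le_norm_of_forall_eq_one Ψ.mulVecLin (N := fun x => ∑ j, |x j|)
    (fun _ => Finset.sum_nonneg fun _ _ => abs_nonneg _) (fun _ hc x => sum_abs_smul hc x)
    (fun _ hc _ => smul_mem_sparsityCone hc) (hsens1 _ hsparse) hcone
  have hlq := mul_le_norm_of_forall_eq_one Ψ.mulVecLin (N := fun x => (∑ j, |x j| ^ q) ^ (1 / q))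
    (fun _ => Real.rpow_nonneg (Finset.sum_nonneg fun _ _ => Real.rpow_nonneg (abs_nonneg _) _) _)
    (fun _ hc x => sum_abs_rpow_rpow_smul hq0 hc x)
    (fun _ hc _ => smul_mem_sparsityCone hc) (hsensq _ hsparse) hcone
  simp only [abs_sub_comm (θh _)]
  exact le_div_of_sensitivity_bounds hμ hμκ hκq hl1 hlq hΨ

/-- deterministic core of Theorem 3 (confidence intervals via
empirical sensitivities). -/
theorem confidence_interval_bound {p : ℕ} (Ψ : Matrix (Fin p) (Fin p) ℝ)
    (s : ℕ) (θs θh : Fin p → ℝ)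
    (hsparse : (Finset.univ.filter fun j => θs j ≠ 0).card ≤ s)
    (h1 : (∑ j, |θh j|) ≤ ∑ j, |θs j|)
    (μ τ : ℝ) (hμ : 0 ≤ μ) (hτ : 0 ≤ τ)
    (q : ℝ) (hq : 1 ≤ q) (κ1 κq : ℝ) (hκ1 : 0 < κ1) (hκq : 0 < κq)
    (hμκ : μ < κ1)
    (hsens1 : ∀ J : Finset (Fin p), J.card ≤ s →
      ∀ Δ : Fin p → ℝ,
        (∑ j, if j ∈ J then 0 else |Δ j|) ≤ (∑ j, if j ∈ J then |Δ j| else 0) →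
        (∑ j, |Δ j|) = 1 → κ1 ≤ ‖Ψ.mulVec Δ‖)
    (hsensq : ∀ J : Finset (Fin p), J.card ≤ s →
      ∀ Δ : Fin p → ℝ,
        (∑ j, if j ∈ J then 0 else |Δ j|) ≤ (∑ j, if j ∈ J then |Δ j| else 0) →
        (∑ j, |Δ j| ^ q) ^ (1 / q) = 1 → κq ≤ ‖Ψ.mulVec Δ‖)
    (hΨ : ‖Ψ.mulVec (θs - θh)‖
        ≤ 2 * (μ * (∑ j, |θh j|) + τ) + μ * ∑ j, |θs j - θh j|) :
    (∑ j, |θh j - θs j| ^ q) ^ (1 / q)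
      ≤ 2 * (μ * (∑ j, |θh j|) + τ) / (κq * (1 - μ / κ1)) :=
  confidence_interval_bound_general Ψ s θs θh hsparse h1 μ τ hμ q hq κ1 κq hκq hμκ hsens1 hsensq hΨ
end
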